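/- For all sufficiently large n there exists a pair (m_n, ℓ_n) ∈ ℤ² which is θ-minimal on scale q_n. -/

import Mathlib

open Real Filter

noncomputable section

/-- Distance from a real number to the nearest integer. -/
def distZ (x : ℝ) : ℝ := |x - (round x : ℝ)|

/-- Iterates of the Gauss map applied to `α`. -/
def gaussIter (α : ℝ) : ℕ → ℝ
  | 0 => Int.fract α
  | n + 1 => Int.fract (gaussIter α n)⁻¹

/-- Partial quotients of the continued fraction expansion of `α`. -/
def cfA (α : ℝ) : ℕ → ℤ
  | 0 => ⌊α⌋
  | n + 1 => ⌊(gaussIter α n)⁻¹⌋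

/-- Denominators `q_n` of the continued fraction approximants of `α`,
satisfying `q 0 = 1`, `q 1 = a 1`, `q (n+2) = a (n+2) * q (n+1) + q n`. -/
def cfQ (α : ℝ) : ℕ → ℤ
  | 0 => 1
  | 1 => cfA α 1
  | n + 2 => cfA α (n + 2) * cfQ α (n + 1) + cfQ α n

/-- `β(α) = limsup (ln q_{n+1})/q_n`. -/
def cfBeta (α : ℝ) : ℝ :=
  limsup (fun n : ℕ => Real.log ((cfQ α (n + 1) : ℝ)) / (cfQ α n : ℝ)) atTop

/-- `β_n = (ln q_{n+1})/q_n`. -/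
def betaIdx (α : ℝ) (n : ℕ) : ℝ := Real.log ((cfQ α (n + 1) : ℝ)) / (cfQ α n : ℝ)

/-- `δ_n = (ln ‖q_n (θ - 1/2)‖ - ln ‖q_n α‖)/q_n`. -/
def deltaIdx (α θ : ℝ) (n : ℕ) : ℝ :=
  (Real.log (distZ ((cfQ α n : ℝ) * (θ - 1 / 2))) -
      Real.log (distZ ((cfQ α n : ℝ) * α))) / (cfQ α n : ℝ)

/-- `δ(α, θ) = limsup (ln q_{n+1} + ln ‖q_n (θ - 1/2)‖)/q_n`. -/
def deltaMar (α θ : ℝ) : ℝ :=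
  limsup (fun n : ℕ =>
      (Real.log ((cfQ α (n + 1) : ℝ)) +
        Real.log (distZ ((cfQ α n : ℝ) * (θ - 1 / 2)))) / (cfQ α n : ℝ)) atTop

/-- `P_k(x)`: the determinant of the `k×k` tridiagonal matrix with diagonal entries
`E - λ tan(π(x + jα))`, `j = 0,…,k-1`, and off-diagonal entries `-1`. -/
def marylandP (α lam E : ℝ) (k : ℕ) (x : ℝ) : ℝ :=
  (Matrix.of fun i j : Fin k =>
      if (i : ℕ) = (j : ℕ) then E - lam * Real.tan (π * (x + ((i : ℕ) : ℝ) * α))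
      else if (i : ℕ) = (j : ℕ) + 1 ∨ (j : ℕ) = (i : ℕ) + 1 then (-1 : ℝ) else 0).det

/-- `tildeP_k(x) = (∏_{j<k} cos(π(x + jα))) * P_k(x)`. -/
def marylandPt (α lam E : ℝ) (k : ℕ) (x : ℝ) : ℝ :=
  (∏ j ∈ Finset.range k, Real.cos (π * (x + (j : ℝ) * α))) * marylandP α lam E k x

/-- Distance from the integer `y` to `q ℤ` (for `q > 0`). -/
def distResid (y q : ℤ) : ℤ := min (y % q) (q - y % q)

/-- The maximum of `|φ|` over the integer interval `[lo, hi]`. -/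
def rmax (φ : ℤ → ℝ) (lo hi : ℤ) : ℝ := sSup ((fun y => |φ y|) '' Set.Icc lo hi)

/-- `γ`-uniformity of the family of points `f l`, `l ∈ I`. -/
def IsUniformOn (γ : ℝ) (I : Finset ℤ) (f : ℤ → ℝ) : Prop :=
  ∀ x ∈ Set.Icc (0 : ℝ) 1, ∀ j ∈ I,
    (∏ l ∈ I.erase j, (|Real.sin (π * (x - f l))| / |Real.sin (π * (f j - f l))|)) <
      Real.exp (γ * ((I.card : ℝ) - 1))

/-- The interval `I_ℓ = [(ℓ-1) q_n - ⌊q_n/2⌋, ℓ q_n - ⌊q_n/2⌋ - 1] ∩ ℤ`. -/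
def Iseg (α : ℝ) (n : ℕ) (ℓ : ℤ) : Finset ℤ :=
  Finset.Icc ((ℓ - 1) * cfQ α n - cfQ α n / 2) (ℓ * cfQ α n - cfQ α n / 2 - 1)

/-- `(m, ℓ)` is `θ`-minimal on scale `q_n`. -/
def ThetaMinimal (α θ : ℝ) (n : ℕ) (m ℓ : ℤ) : Prop :=
  (-(cfQ α n : ℝ) / 2 ≤ (m : ℝ) ∧ (m : ℝ) < (cfQ α n : ℝ) / 2) ∧
  ((|ℓ| : ℝ) ≤
      (Real.exp (deltaIdx α θ n * (cfQ α n : ℝ)) + (cfQ α n : ℝ) + 1 / 2) / (cfQ α n : ℝ)) ∧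
  (distZ (θ - 1 / 2 + ((m : ℝ) + (ℓ : ℝ) * (cfQ α n : ℝ)) * α) <
      (1 / 2 + 1 / (2 * (cfQ α n : ℝ))) * distZ ((cfQ α n : ℝ) * α)) ∧
  (4 ≤ cfA α (n + 1) →
      ∀ j : ℤ, (|j| : ℝ) ≤ (cfA α (n + 1) : ℝ) / 6 →
        ∀ k : ℤ, |k| < cfQ α n →
          distZ (θ - 1 / 2 + ((m : ℝ) + (j : ℝ) * (cfQ α n : ℝ)) * α) ≤
            20 * distZ (θ - 1 / 2 + ((m : ℝ) + (j : ℝ) * (cfQ α n : ℝ) + (k : ℝ)) * α)) ∧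
  (cfA α (n + 1) ≤ 3 →
      ∀ k : ℤ, -(cfQ α n : ℝ) / 2 ≤ (k : ℝ) → (k : ℝ) < (cfQ α n : ℝ) / 2 →
        distZ (θ - 1 / 2 + (m : ℝ) * α) ≤ 20 * distZ (θ - 1 / 2 + (k : ℝ) * α))

end

/-!
Write `x = θ - 1/2`, `q = q_n`, and let `m` minimise `‖x + mα‖` over the residues `-q/2 ≤ m < q/2`.
Since `p_n` is invertible modulo `q`, some residue `m₀` puts `q (x + m₀α)` within
`‖qx‖ + (q/2)‖qα‖` of an integer, hence `‖x + mα‖ ≤ ‖qx‖/q + ‖qα‖/2`. Replacing `m` by `m + ℓq`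
moves `x + mα` in steps of `±‖qα‖`, so a shift `ℓ` of size about `‖qx‖/(q‖qα‖) = e^{δ_n q_n}/q_n`
brings it within `‖qα‖/2` of an integer. Finally, best approximation gives
`‖kα‖ ≥ ‖q_{n-1}α‖ ≥ a_{n+1}‖qα‖` for `0 < |k| < q`, so the points `x + (m + jq)α` and
`x + (m + jq + k)α` cannot both be much closer to `ℤ` than `a_{n+1}‖qα‖`; together with the
minimality of `m` this yields the factor `20`.
-/

theorem distZ_nonneg (x : ℝ) : 0 ≤ distZ x := abs_nonneg _

theorem distZ_le_abs_sub_intCast (x : ℝ) (z : ℤ) : distZ x ≤ |x - z| := round_le x z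

theorem distZ_eq_abs_sub_of_abs_lt {x : ℝ} {z : ℤ} (h : |x - z| < 1 / 2) :
    distZ x = |x - z| := by
  have hround : round (x - z) = 0 := round_eq_zero_iff.2 ⟨by linarith [neg_abs_le (x - z)],
    (le_abs_self _).trans_lt h⟩
  have : round x = z := by simpa [hround] using round_intCast_add (x - z) z
  rw [distZ, this]

theorem distZ_sub_le (x y : ℝ) : distZ (x - y) ≤ distZ x + distZ y :=
  calc distZ (x - y) ≤ |x - y - ((round x - round y : ℤ) : ℝ)| := distZ_le_abs_sub_intCast _ _
    _ = |(x - round x) - (y - round y)| := by push_cast; ring_nf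
    _ ≤ distZ x + distZ y := abs_sub _ _

theorem distZ_add_intCast_mul_le (x y : ℝ) (j : ℤ) :
    distZ (x + j * y) ≤ distZ x + |(j : ℝ)| * distZ y :=
  calc distZ (x + j * y) ≤ |x + j * y - ((round x + j * round y : ℤ) : ℝ)| :=
        distZ_le_abs_sub_intCast _ _
    _ = |(x - round x) + j * (y - round y)| := by push_cast; ring_nf
    _ ≤ distZ x + |(j : ℝ)| * distZ y := (abs_add_le _ _).trans_eq (by rw [abs_mul]; rfl)

theorem exists_int_abs_add_mul_le (y : ℝ) {e : ℝ} (he : e ≠ 0) :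
    ∃ L : ℤ, |y + L * e| ≤ |e| / 2 ∧ |(L : ℝ)| ≤ |y| / |e| + 1 / 2 := by
  refine ⟨round (-(y / e)), ?_, ?_⟩
  · have heq : y + round (-(y / e)) * e = -e * (-(y / e) - round (-(y / e))) := by
      field_simp; ring
    rw [heq, abs_mul, abs_neg]
    nlinarith [abs_sub_round (-(y / e)), abs_nonneg e]
  · have := abs_sub_abs_le_abs_sub (round (-(y / e)) : ℝ) (-(y / e))
    rw [abs_sub_comm, abs_neg, abs_div] at this
    linarith [abs_sub_round (-(y / e))]

theorem mul_fract_inv_lt_half {x : ℝ} (h0 : 0 < x) (h1 : x < 1) : x * Int.fract x⁻¹ < 1 / 2 := by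
  have ha : (1 : ℝ) ≤ ⌊x⁻¹⌋ := by
    exact_mod_cast Int.le_floor.2 (by push_cast; exact (one_le_inv₀ h0).2 h1.le)
  have hlt : x⁻¹ < ⌊x⁻¹⌋ + 1 := Int.lt_floor_add_one _
  have hx : x * x⁻¹ = 1 := mul_inv_cancel₀ h0.ne'
  rw [Int.fract]
  nlinarith

theorem le_abs_mul_sub_mul_of_abs_add_mul_lt {c d Q₀ Q₁ : ℤ} {η₀ η₁ : ℝ} (hQ₀ : 0 ≤ Q₀)
    (hη₀ : 0 ≤ η₀) (hη₁ : 0 ≤ η₁) (hne : c * Q₁ + d * Q₀ ≠ 0) (hlt : |c * Q₁ + d * Q₀| < Q₁) :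
    η₀ ≤ |c * η₁ - d * η₀| := by
  obtain ⟨hlt₁, hlt₂⟩ := abs_lt.1 hlt
  have hd : d ≠ 0 := by
    rintro rfl
    rcases lt_trichotomy c 0 with hc | rfl | hc
    · nlinarith
    · simp at hne
    · nlinarith
  rcases hd.lt_or_gt with hd | hd
  · have hc : 0 ≤ c := by by_contra! hc; nlinarith
    have hcR : (0 : ℝ) ≤ c := by exact_mod_cast hc
    have hdR : (d : ℝ) ≤ -1 := by exact_mod_cast Int.le_sub_one_of_lt hd
    rw [abs_of_nonneg (by nlinarith)]
    nlinarith
  · have hc : c ≤ 0 := by by_contra! hc; nlinarith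
    have hcR : (c : ℝ) ≤ 0 := by exact_mod_cast hc
    have hdR : (1 : ℝ) ≤ d := by exact_mod_cast hd
    rw [abs_of_nonpos (by nlinarith)]
    nlinarith

noncomputable def centeredResidues (q : ℤ) : Finset ℤ := Finset.Ico (-(q / 2)) ((q + 1) / 2)

theorem mem_centeredResidues {q m : ℤ} : m ∈ centeredResidues q ↔ -q ≤ 2 * m ∧ 2 * m < q := by
  rw [centeredResidues, Finset.mem_Ico]; omega

theorem exists_mem_centeredResidues_eq_add_mul {q : ℤ} (hq : 0 < q) (y : ℤ) :
    ∃ m ∈ centeredResidues q, ∃ j : ℤ, y = m + j * q := by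
  have h₀ := Int.emod_nonneg y hq.ne'
  have h₁ := Int.emod_lt_of_pos y hq
  have hy := Int.emod_add_mul_ediv y q
  by_cases h : 2 * (y % q) < q
  · exact ⟨y % q, mem_centeredResidues.2 ⟨by omega, h⟩, y / q, by linarith⟩
  · exact ⟨y % q - q, mem_centeredResidues.2 ⟨by omega, by omega⟩, y / q + 1, by linarith⟩

theorem mem_centeredResidues_iff_real {q m : ℤ} :
    m ∈ centeredResidues q ↔ -(q : ℝ) / 2 ≤ m ∧ (m : ℝ) < q / 2 := by
  rw [mem_centeredResidues, div_le_iff₀' two_pos, lt_div_iff₀' two_pos]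
  norm_cast

theorem abs_le_of_mem_centeredResidues {q m : ℤ} (hm : m ∈ centeredResidues q) :
    |(m : ℝ)| ≤ q / 2 := by
  obtain ⟨h₁, h₂⟩ := mem_centeredResidues_iff_real.1 hm
  exact abs_le.2 ⟨by linarith, h₂.le⟩

-- Solving `r + m p ≡ 0 (mod q)` for `r` the integer nearest to `q x`.
theorem exists_mem_centeredResidues_distZ_le {p q : ℤ} (hq : 0 < q) (hpq : IsCoprime p q)
    (α x : ℝ) :
    ∃ m ∈ centeredResidues q, distZ (x + m * α) ≤ distZ (q * x) / q + |q * α - p| / 2 := by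
  obtain ⟨u, v, huv⟩ := hpq
  set r := round ((q : ℝ) * x)
  obtain ⟨m, hm, j, hy⟩ := exists_mem_centeredResidues_eq_add_mul hq (-r * u)
  refine ⟨m, hm, ?_⟩
  have hqR : (0 : ℝ) < q := by exact_mod_cast hq
  have key : x + m * α - ((r * v - j * p : ℤ) : ℝ) = ((q * x - r) + m * (q * α - p)) / q := by
    have huvR : (u : ℝ) * p + v * q = 1 := by exact_mod_cast huv
    have hyR : (-r * u : ℝ) = m + j * q := by exact_mod_cast hy
    rw [eq_div_iff hqR.ne']
    push_cast
    linear_combination (-(p : ℝ)) * hyR - (r : ℝ) * huvR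
  calc distZ (x + m * α) ≤ |x + m * α - ((r * v - j * p : ℤ) : ℝ)| :=
        distZ_le_abs_sub_intCast _ _
    _ = |(q * x - r) + m * (q * α - p)| / q := by rw [key, abs_div, abs_of_pos hqR]
    _ ≤ (distZ (q * x) + q / 2 * |q * α - p|) / q := by
        gcongr
        refine (abs_add_le _ _).trans (add_le_add le_rfl ?_)
        rw [abs_mul]
        exact mul_le_mul_of_nonneg_right (abs_le_of_mem_centeredResidues hm) (abs_nonneg _)
    _ = distZ (q * x) / q + |q * α - p| / 2 := by field_simp

theorem inv_gaussIter (α : ℝ) (n : ℕ) :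
    (gaussIter α n)⁻¹ = cfA α (n + 1) + gaussIter α (n + 1) :=
  (Int.floor_add_fract _).symm

-- Numerators `p_n` of the convergents; `p_0 = a_0 = 0` presumes `α ∈ (0, 1)`.
noncomputable def cfP (α : ℝ) : ℕ → ℤ
  | 0 => 0
  | 1 => 1
  | n + 2 => cfA α (n + 2) * cfP α (n + 1) + cfP α n

-- `η_n = |q_n α - p_n|`, see `abs_cfQ_mul_sub_cfP`.
noncomputable def cfEta (α : ℝ) : ℕ → ℝ
  | 0 => gaussIter α 0
  | n + 1 => cfEta α n * gaussIter α (n + 1)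

theorem cfP_mul_cfQ_sub_cfQ_mul_cfP (α : ℝ) (n : ℕ) :
    cfP α (n + 1) * cfQ α n - cfQ α (n + 1) * cfP α n = (-1) ^ n := by
  induction n with
  | zero => simp [cfP, cfQ]
  | succ n ih =>
    simp only [cfP, cfQ] at ih ⊢
    linear_combination (-1 : ℤ) * ih

theorem isCoprime_cfP_cfQ (α : ℝ) (n : ℕ) : IsCoprime (cfP α n) (cfQ α n) := by
  refine ⟨-(-1) ^ n * cfQ α (n + 1), (-1) ^ n * cfP α (n + 1), ?_⟩
  have hsq : ((-1 : ℤ) ^ n) * (-1) ^ n = 1 := by rw [← mul_pow]; norm_num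
  linear_combination (-1 : ℤ) ^ n * cfP_mul_cfQ_sub_cfQ_mul_cfP α n + hsq

section ContinuedFraction

variable {α : ℝ} (hα : α ∈ Set.Ioo 0 1) (hirr : Irrational α)
include hα hirr

theorem gaussIter_mem_Ioo_and_irrational (n : ℕ) :
    gaussIter α n ∈ Set.Ioo 0 1 ∧ Irrational (gaussIter α n) := by
  induction n with
  | zero => rw [gaussIter, Int.fract_eq_self.2 ⟨hα.1.le, hα.2⟩]; exact ⟨hα, hirr⟩
  | succ n ih =>
    have hfr : Irrational (gaussIter α (n + 1)) := ih.2.inv.sub_intCast _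
    exact ⟨⟨(Int.fract_nonneg _).lt_of_ne hfr.ne_zero.symm, Int.fract_lt_one _⟩, hfr⟩

theorem gaussIter_pos (n : ℕ) : 0 < gaussIter α n :=
  (gaussIter_mem_Ioo_and_irrational hα hirr n).1.1

theorem gaussIter_lt_one (n : ℕ) : gaussIter α n < 1 :=
  (gaussIter_mem_Ioo_and_irrational hα hirr n).1.2

theorem one_le_cfA_succ (n : ℕ) : 1 ≤ cfA α (n + 1) :=
  Int.le_floor.2 <| by
    exact_mod_cast (one_le_inv₀ (gaussIter_pos hα hirr n)).2 (gaussIter_lt_one hα hirr n).le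

theorem one_le_cfQ (n : ℕ) : 1 ≤ cfQ α n := by
  induction n using Nat.twoStepInduction with
  | zero => rfl
  | one => exact one_le_cfA_succ hα hirr 0
  | more n ih₀ ih₁ =>
    have := one_le_cfA_succ hα hirr (n + 1)
    show 1 ≤ cfA α (n + 2) * cfQ α (n + 1) + cfQ α n
    nlinarith

theorem cfEta_pos (n : ℕ) : 0 < cfEta α n := by
  induction n with
  | zero => exact gaussIter_pos hα hirr 0
  | succ n ih => exact mul_pos ih (gaussIter_pos hα hirr _)

theorem cfEta_le_gaussIter (n : ℕ) : cfEta α n ≤ gaussIter α n := by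
  induction n with
  | zero => rfl
  | succ n ih =>
    exact mul_le_of_le_one_left (gaussIter_pos hα hirr _).le
      (ih.trans (gaussIter_lt_one hα hirr n).le)

theorem cfEta_succ_lt_half (n : ℕ) : cfEta α (n + 1) < 1 / 2 :=
  calc cfEta α (n + 1) ≤ gaussIter α n * gaussIter α (n + 1) :=
        mul_le_mul_of_nonneg_right (cfEta_le_gaussIter hα hirr n) (gaussIter_pos hα hirr _).le
    _ < 1 / 2 := mul_fract_inv_lt_half (gaussIter_pos hα hirr n) (gaussIter_lt_one hα hirr n)

theorem cfEta_eq_cfA_mul_add (n : ℕ) :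
    cfEta α n = cfA α (n + 2) * cfEta α (n + 1) + cfEta α (n + 2) := by
  have hg := inv_gaussIter α (n + 1)
  have hne := (gaussIter_pos hα hirr (n + 1)).ne'
  simp only [cfEta]
  field_simp at hg
  linear_combination cfEta α n * hg

theorem cfQ_mul_sub_cfP (n : ℕ) : (cfQ α n : ℝ) * α - cfP α n = (-1) ^ n * cfEta α n := by
  have hg₀ : gaussIter α 0 = α := Int.fract_eq_self.2 ⟨hα.1.le, hα.2⟩
  induction n using Nat.twoStepInduction with
  | zero => simp [cfQ, cfP, cfEta, hg₀]
  | one =>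
    have hg : α⁻¹ = cfA α 1 + gaussIter α 1 := by
      simpa only [hg₀] using inv_gaussIter α 0
    have hα₀ : α * α⁻¹ = 1 := mul_inv_cancel₀ hα.1.ne'
    simp only [cfQ, cfP, cfEta, hg₀, Int.cast_one]
    linear_combination (-α) * hg + hα₀
  | more n ih₀ ih₁ =>
    simp only [cfQ, cfP, Int.cast_add, Int.cast_mul]
    linear_combination cfA α (n + 2) * ih₁ + ih₀
      + (-1) ^ n * cfEta_eq_cfA_mul_add hα hirr n

theorem abs_cfQ_mul_sub_cfP (n : ℕ) : |(cfQ α n : ℝ) * α - cfP α n| = cfEta α n := by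
  rw [cfQ_mul_sub_cfP hα hirr, abs_mul, abs_pow, abs_neg, abs_one, one_pow, one_mul,
    abs_of_pos (cfEta_pos hα hirr _)]

theorem distZ_cfQ_succ_mul (n : ℕ) : distZ (cfQ α (n + 1) * α) = cfEta α (n + 1) := by
  have habs := abs_cfQ_mul_sub_cfP hα hirr (n + 1)
  rw [distZ_eq_abs_sub_of_abs_lt (habs ▸ cfEta_succ_lt_half hα hirr n), habs]

-- Best approximation: `(q_{n+1}, p_{n+1})` and `(q_n, p_n)` form a basis of `ℤ²`.
theorem cfEta_le_abs_mul_sub {n : ℕ} {t : ℤ} (l : ℤ) (ht : t ≠ 0) (hlt : |t| < cfQ α (n + 1)) :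
    cfEta α n ≤ |t * α - l| := by
  set σ : ℤ := (-1) ^ n
  have hσ : σ * σ = 1 := by rw [← mul_pow]; norm_num
  have hdet := cfP_mul_cfQ_sub_cfQ_mul_cfP α n
  set c := σ * (cfQ α n * l - t * cfP α n)
  set d := σ * (cfP α (n + 1) * t - cfQ α (n + 1) * l)
  have ht' : c * cfQ α (n + 1) + d * cfQ α n = t := by
    linear_combination (σ * t) * hdet + t * hσ
  have hl' : c * cfP α (n + 1) + d * cfP α n = l := by
    linear_combination (σ * l) * hdet + l * hσ
  have hreal : (t : ℝ) * α - l = -(σ : ℝ) * (c * cfEta α (n + 1) - d * cfEta α n) := by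
    have h₀ := cfQ_mul_sub_cfP hα hirr n
    have h₁ := cfQ_mul_sub_cfP hα hirr (n + 1)
    rw [← ht', ← hl']
    have hσR : (σ : ℝ) = (-1) ^ n := by simp [σ]
    push_cast at h₀ h₁ ⊢
    linear_combination (c : ℝ) * h₁ + (d : ℝ) * h₀
      + (c * cfEta α (n + 1) - d * cfEta α n) * hσR
  rw [hreal, abs_mul, abs_neg, show |(σ : ℝ)| = 1 by simp [σ], one_mul]
  exact le_abs_mul_sub_mul_of_abs_add_mul_lt (by linarith [one_le_cfQ hα hirr n])
    (cfEta_pos hα hirr n).le (cfEta_pos hα hirr _).le (ht' ▸ ht) (ht' ▸ hlt)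

theorem distZ_cfQ_mul_le_exp_deltaIdx (θ : ℝ) (n : ℕ) :
    distZ (cfQ α (n + 1) * (θ - 1 / 2)) ≤
      exp (deltaIdx α θ (n + 1) * cfQ α (n + 1)) * cfEta α (n + 1) := by
  have hq : (cfQ α (n + 1) : ℝ) ≠ 0 := by
    have := one_le_cfQ hα hirr (n + 1); positivity
  have hη := cfEta_pos hα hirr (n + 1)
  rw [deltaIdx, div_mul_cancel₀ _ hq, distZ_cfQ_succ_mul hα hirr, exp_sub, exp_log hη,
    div_mul_cancel₀ _ hη.ne']
  rcases (distZ_nonneg (cfQ α (n + 1) * (θ - 1 / 2))).eq_or_lt with h | h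
  · rw [← h]; positivity
  · rw [exp_log h]

theorem exists_shift_abs_le_distZ_lt (θ : ℝ) (n : ℕ) {m : ℤ}
    (hm : distZ (θ - 1 / 2 + m * α) ≤
      distZ (cfQ α (n + 1) * (θ - 1 / 2)) / cfQ α (n + 1) + cfEta α (n + 1) / 2) :
    ∃ ℓ : ℤ, (|ℓ| : ℝ) ≤
        (exp (deltaIdx α θ (n + 1) * cfQ α (n + 1)) + cfQ α (n + 1) + 1 / 2) / cfQ α (n + 1) ∧
      distZ (θ - 1 / 2 + (m + ℓ * cfQ α (n + 1)) * α) <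
        (1 / 2 + 1 / (2 * cfQ α (n + 1))) * distZ (cfQ α (n + 1) * α) := by
  set q : ℤ := cfQ α (n + 1)
  set η := cfEta α (n + 1)
  set x := θ - 1 / 2
  set E := exp (deltaIdx α θ (n + 1) * q)
  have hqR : (1 : ℝ) ≤ q := by exact_mod_cast one_le_cfQ hα hirr (n + 1)
  have hη : 0 < η := cfEta_pos hα hirr (n + 1)
  have he : |q * α - cfP α (n + 1)| = η := abs_cfQ_mul_sub_cfP hα hirr (n + 1)
  set y := x + m * α - round (x + m * α)
  obtain ⟨ℓ, hℓe, hℓ⟩ := exists_int_abs_add_mul_le y (e := q * α - cfP α (n + 1))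
    (fun h ↦ by simp [h] at he; linarith)
  rw [he] at hℓe hℓ
  refine ⟨ℓ, ?_, ?_⟩
  · have hS := distZ_cfQ_mul_le_exp_deltaIdx hα hirr θ n
    have hy : |y| / η ≤ E / q + 1 / 2 := by
      rw [div_le_iff₀ hη]
      calc |y| ≤ distZ (q * x) / q + η / 2 := hm
        _ ≤ E * η / q + η / 2 := by gcongr
        _ = (E / q + 1 / 2) * η := by ring
    rw [le_div_iff₀ (by linarith)]
    calc (|ℓ| : ℝ) * q ≤ (E / q + 1) * q := by gcongr; linarith
      _ ≤ E + q + 1 / 2 := by field_simp; linarith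
  · rw [distZ_cfQ_succ_mul hα hirr]
    have hshift : x + (m + ℓ * q) * α - ((round (x + m * α) + ℓ * cfP α (n + 1) : ℤ) : ℝ) =
        y + ℓ * (q * α - cfP α (n + 1)) := by
      push_cast; ring
    calc distZ (x + (m + ℓ * q) * α) ≤ η / 2 :=
          (distZ_le_abs_sub_intCast _ _).trans (hshift ▸ hℓe)
      _ < (1 / 2 + 1 / (2 * q)) * η := by
          have : 0 < 1 / (2 * (q : ℝ)) := by positivity
          nlinarith

theorem distZ_le_twenty_mul_distZ (x : ℝ) (n : ℕ) {m : ℤ}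
    (hm : m ∈ centeredResidues (cfQ α (n + 1)))
    (hmin : ∀ m' ∈ centeredResidues (cfQ α (n + 1)), distZ (x + m * α) ≤ distZ (x + m' * α))
    (hA : 4 ≤ cfA α (n + 2)) {j k : ℤ} (hj : |(j : ℝ)| ≤ cfA α (n + 2) / 6)
    (hk : |k| < cfQ α (n + 1)) :
    distZ (x + (m + j * cfQ α (n + 1)) * α) ≤
      20 * distZ (x + (m + j * cfQ α (n + 1) + k) * α) := by
  set q := cfQ α (n + 1)
  set η := cfEta α (n + 1)
  set A := cfA α (n + 2)
  set M := distZ (x + (m + j * q) * α)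
  set D := distZ (x + (m + j * q + k) * α)
  rcases eq_or_ne k 0 with rfl | hk0
  · simp only [D, Int.cast_zero, add_zero]
    linarith [distZ_nonneg (x + (m + j * q) * α)]
  have hq : 0 < q := one_le_cfQ hα hirr (n + 1)
  have hη : 0 < η := cfEta_pos hα hirr (n + 1)
  obtain ⟨m', hm', i, hi⟩ := exists_mem_centeredResidues_eq_add_mul hq (m + k)
  have hi_abs : |(i : ℝ)| ≤ 1 := by
    obtain ⟨h₁, h₂⟩ := mem_centeredResidues.1 hm
    obtain ⟨h₃, h₄⟩ := mem_centeredResidues.1 hm'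
    obtain ⟨h₅, h₆⟩ := abs_lt.1 hk
    have hlt : i < 2 := lt_of_mul_lt_mul_right (a := q) (by linarith) hq.le
    have hgt : -2 < i := lt_of_mul_lt_mul_right (a := q) (by linarith) hq.le
    rw [abs_le]
    constructor <;> exact_mod_cast (by omega : _)
  have hM : M ≤ distZ (x + m * α) + |(j : ℝ)| * η := by
    have h := distZ_add_intCast_mul_le (x + m * α) (q * α) j
    rw [distZ_cfQ_succ_mul hα hirr] at h
    convert h using 2
    ring
  have hD : distZ (x + m * α) ≤ D + (|(j : ℝ)| + 1) * η := by
    have h := distZ_add_intCast_mul_le (x + (m + j * q + k) * α) (q * α) (-(j + i))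
    rw [distZ_cfQ_succ_mul hα hirr] at h
    have hm'eq : x + m' * α = x + (m + j * q + k) * α + ((-(j + i) : ℤ) : ℝ) * (q * α) := by
      have : (m' : ℝ) = m + k - i * q := by
        have := congrArg (fun z : ℤ ↦ (z : ℝ)) hi; push_cast at this; linarith
      rw [this]; push_cast; ring
    calc distZ (x + m * α) ≤ distZ (x + m' * α) := hmin m' hm'
      _ ≤ D + |((-(j + i) : ℤ) : ℝ)| * η := hm'eq ▸ h
      _ ≤ D + (|(j : ℝ)| + 1) * η := by
          gcongr
          rw [Int.cast_neg, abs_neg, Int.cast_add]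
          linarith [abs_add_le (j : ℝ) i]
  have hkα : cfEta α n ≤ D + M := by
    have hsub : (k : ℝ) * α = x + (m + j * q + k) * α - (x + (m + j * q) * α) := by ring
    calc cfEta α n ≤ distZ (k * α) := cfEta_le_abs_mul_sub hα hirr _ hk0 hk
      _ ≤ D + M := hsub ▸ distZ_sub_le _ _
  have hAη : A * η ≤ cfEta α n := by
    rw [cfEta_eq_cfA_mul_add hα hirr n]; linarith [cfEta_pos hα hirr (n + 2)]
  have hjη : |(j : ℝ)| * η ≤ A * η / 6 := by
    have := mul_le_mul_of_nonneg_right hj hη.le; linarith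
  have h4η : 4 * η ≤ A * η := by
    have hA' : (4 : ℝ) ≤ A := by exact_mod_cast hA
    nlinarith
  linarith

end ContinuedFraction

theorem thetaMinimal_exists_general
    (α θ : ℝ) (hα : α ∈ Set.Ioo (0 : ℝ) 1) (hirr : Irrational α) :
    ∃ N : ℕ, ∀ n : ℕ, N ≤ n → ∃ m ℓ : ℤ, ThetaMinimal α θ n m ℓ := by
  refine ⟨1, fun n hn ↦ ?_⟩
  obtain ⟨n, rfl⟩ := Nat.exists_eq_add_of_le' hn
  have hq : 0 < cfQ α (n + 1) := one_le_cfQ hα hirr (n + 1)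
  obtain ⟨m, hm, hmin⟩ := (centeredResidues (cfQ α (n + 1))).exists_min_image
    (fun t : ℤ ↦ distZ (θ - 1 / 2 + t * α)) ⟨0, mem_centeredResidues.2 ⟨by omega, by omega⟩⟩
  obtain ⟨m₀, hm₀, hm₀_le⟩ := exists_mem_centeredResidues_distZ_le hq (isCoprime_cfP_cfQ α (n + 1))
    α (θ - 1 / 2)
  rw [abs_cfQ_mul_sub_cfP hα hirr] at hm₀_le
  obtain ⟨ℓ, hℓ, hdist⟩ := exists_shift_abs_le_distZ_lt hα hirr θ n ((hmin m₀ hm₀).trans hm₀_le)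
  refine ⟨m, ℓ, mem_centeredResidues_iff_real.1 hm, hℓ, hdist,
    fun hA j hj k hk ↦ distZ_le_twenty_mul_distZ hα hirr _ n hm hmin hA hj hk,
    fun _ k hk₁ hk₂ ↦ ?_⟩
  linarith [hmin k (mem_centeredResidues_iff_real.2 ⟨hk₁, hk₂⟩), distZ_nonneg (θ - 1 / 2 + k * α)]

/-- existence of a `θ`-minimal pair `(m_n, ℓ_n)` on scale `q_n`
for all sufficiently large `n`. -/
theorem thetaMinimal_exists
    (α θ : ℝ) (hα : α ∈ Set.Ioo (0 : ℝ) 1) (hirr : Irrational α)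
    (hθ : ∀ j m : ℤ, θ ≠ 1 / 2 + (j : ℝ) * α + (m : ℝ)) :
    ∃ N : ℕ, ∀ n : ℕ, N ≤ n → ∃ m ℓ : ℤ, ThetaMinimal α θ n m ℓ :=
  thetaMinimal_exists_general α θ hα hirr
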